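/- In the rank-one case, the support of σ^k_{x,t} = (μ^k_{x,t} + μ^k_{x,−t})/2 for t ≠ 0 equals [−|x|−t, −||x|−t|] ∪ [||x|−t|, |x|+t]; in particular it is contained in {ξ ∈ ℝ : |ξ−x| ≤ t} ∪ {ξ : |ξ+x| ≤ t}. -/

import Mathlib

/-!
On `z ≠ 0` the two sign terms of `σ^k_{x,t}` add up to
`m_{k-1/2}(|x|,|t|,|z|) |z|^{2k} ((z + x)² - t²) / (4zx)`. Gegenbauer's kernel vanishes off
`||x| - t| ≤ |z| ≤ |x| + t` and is positive strictly inside, so the density is nonzero on the open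
annulus except at the two zeros `z = ±t - x` of the numerator; the closure of the annulus minus
finitely many points is the closed annulus. The inclusion holds because `||ξ| - |x|| ≤ t` on the
annulus, and one of `|ξ - x|`, `|ξ + x|` equals `||ξ| - |x||`.
-/

open Set

/-- Gegenbauer's kernel `m_α(x,y,z)` for the Bessel product formula (with the indicator
of `[|x−y|, x+y]` built in). -/
noncomputable def besselProdKernel (α x y : ℝ) (z : ℝ) : ℝ :=
  Set.indicator (Set.Icc |x - y| (x + y))
    (fun z => 2 ^ (1 - 2 * α) * Real.Gamma (α + 1) /
        (Real.sqrt Real.pi * Real.Gamma (α + 1/2)) *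
        ((z ^ 2 - (x - y) ^ 2) * ((x + y) ^ 2 - z ^ 2)) ^ (α - 1/2) /
        (x * y * z) ^ (2 * α)) z

/-- `σ_{z,x,t} = (z² + x² − t²)/(2zx)` for `z, x ≠ 0`, and `0` otherwise. -/
noncomputable def sigCoeff (z x t : ℝ) : ℝ :=
  if z ≠ 0 ∧ x ≠ 0 then (z ^ 2 + x ^ 2 - t ^ 2) / (2 * z * x) else 0

/-- The density of the rank-one Dunkl convolution measure `μ^k_{x,t}`:
`m_{k−1/2}(|x|,|t|,|z|)|z|^{2k} (1 − σ_{x,t,z} + σ_{z,x,t} + σ_{z,t,x})/2`. -/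
noncomputable def rankOneDens (k x t : ℝ) (z : ℝ) : ℝ :=
  besselProdKernel (k - 1/2) |x| |t| |z| * |z| ^ (2 * k) *
    ((1 - sigCoeff x t z + sigCoeff z x t + sigCoeff z t x) / 2)

/-- The density of the symmetrization `σ^k_{x,t} = (μ^k_{x,t} + μ^k_{x,−t})/2`. -/
noncomputable def rankOneSphMeanDens (k x t : ℝ) (z : ℝ) : ℝ :=
  (rankOneDens k x t z + rankOneDens k x (-t) z) / 2

section AbsIntervals

variable {α : Type*} [Field α] [LinearOrder α] [IsStrictOrderedRing α]

theorem preimage_abs_Icc {a b : α} (ha : 0 ≤ a) :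
    (fun z : α => |z|) ⁻¹' Icc a b = Icc (-b) (-a) ∪ Icc a b := by
  ext z
  simp only [mem_preimage, mem_union, mem_Icc, le_abs', abs_le]
  constructor
  · rintro ⟨hz | hz, hb, hb'⟩
    exacts [Or.inl ⟨hb, hz⟩, Or.inr ⟨hz, hb'⟩]
  · rintro (⟨hb, hz⟩ | ⟨hz, hb⟩)
    · exact ⟨Or.inl hz, hb, by linarith⟩
    · exact ⟨Or.inr hz, by linarith, hb⟩

theorem abs_sub_le_or_abs_add_le {z x t : α} (h₁ : |x| - t ≤ |z|) (h₂ : |z| ≤ |x| + t) :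
    |z - x| ≤ t ∨ |z + x| ≤ t := by
  rcases abs_cases z with ⟨hz, -⟩ | ⟨hz, -⟩ <;> rcases abs_cases x with ⟨hx, -⟩ | ⟨hx, -⟩
  all_goals first
    | exact Or.inl (abs_le.2 ⟨by linarith, by linarith⟩)
    | exact Or.inr (abs_le.2 ⟨by linarith, by linarith⟩)

end AbsIntervals

theorem Icc_subset_closure_of_Ioo_diff_subset {u v : ℝ} (huv : u < v) {s S : Set ℝ}
    (hs : s.Countable) (hS : Ioo u v \ s ⊆ S) : Icc u v ⊆ closure S :=
  calc Icc u v = closure (Ioo u v) := (closure_Ioo huv.ne).symm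
    _ ⊆ closure (Ioo u v ∩ sᶜ) :=
      closure_minimal ((hs.dense_compl ℝ).open_subset_closure_inter isOpen_Ioo) isClosed_closure
    _ ⊆ closure S := closure_mono hS

theorem closure_eq_preimage_abs_Icc {a b : ℝ} (ha : 0 ≤ a) (hab : a < b) {s S : Set ℝ}
    (hs : s.Countable) (hS : S ⊆ (fun z : ℝ => |z|) ⁻¹' Icc a b)
    (hS' : (fun z : ℝ => |z|) ⁻¹' Ioo a b \ s ⊆ S) :
    closure S = (fun z : ℝ => |z|) ⁻¹' Icc a b := by
  refine (closure_minimal hS (isClosed_Icc.preimage continuous_abs)).antisymm ?_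
  have hIoo : Ioo (-b) (-a) ∪ Ioo a b ⊆ (fun z : ℝ => |z|) ⁻¹' Ioo a b := by
    rintro z (⟨h₁, h₂⟩ | ⟨h₁, h₂⟩)
    · rw [mem_preimage, abs_of_neg (by linarith)]; constructor <;> linarith
    · rw [mem_preimage, abs_of_pos (by linarith)]; exact ⟨h₁, h₂⟩
  rw [preimage_abs_Icc ha]
  exact union_subset
    (Icc_subset_closure_of_Ioo_diff_subset (by linarith) hs
      ((sdiff_subset_sdiff_left (subset_union_left.trans hIoo)).trans hS'))
    (Icc_subset_closure_of_Ioo_diff_subset hab hs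
      ((sdiff_subset_sdiff_left (subset_union_right.trans hIoo)).trans hS'))

theorem besselProdKernel_eq_zero_of_notMem {α x y z : ℝ} (h : z ∉ Icc |x - y| (x + y)) :
    besselProdKernel α x y z = 0 :=
  indicator_of_notMem h _

theorem besselProdKernel_pos {α x y z : ℝ} (hα : -1/2 < α) (hx : 0 < x) (hy : 0 < y)
    (h₁ : |x - y| < z) (h₂ : z < x + y) : 0 < besselProdKernel α x y z := by
  rw [besselProdKernel, indicator_of_mem (mem_Icc.2 ⟨h₁.le, h₂.le⟩)]
  have hz : 0 < z := (abs_nonneg _).trans_lt h₁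
  have hlo : (x - y) ^ 2 < z ^ 2 := sq_lt_sq' (abs_lt.1 h₁).1 (abs_lt.1 h₁).2
  have hhi : z ^ 2 < (x + y) ^ 2 := sq_lt_sq' (by linarith) h₂
  have hprod : 0 < (z ^ 2 - (x - y) ^ 2) * ((x + y) ^ 2 - z ^ 2) :=
    mul_pos (by linarith) (by linarith)
  have hΓ₁ : 0 < Real.Gamma (α + 1) := Real.Gamma_pos_of_pos (by linarith)
  have hΓ₂ : 0 < Real.Gamma (α + 1/2) := Real.Gamma_pos_of_pos (by linarith)
  positivity

theorem sigCoeff_of_ne_zero {z x : ℝ} (t : ℝ) (hz : z ≠ 0) (hx : x ≠ 0) :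
    sigCoeff z x t = (z ^ 2 + x ^ 2 - t ^ 2) / (2 * z * x) :=
  if_pos ⟨hz, hx⟩

theorem rankOneSphMeanDens_eq_zero_of_abs_notMem {k x t z : ℝ}
    (h : |z| ∉ Icc |(|x| - |t|)| (|x| + |t|)) : rankOneSphMeanDens k x t z = 0 := by
  simp [rankOneSphMeanDens, rankOneDens, besselProdKernel_eq_zero_of_notMem h]

theorem rankOneSphMeanDens_of_ne_zero (k : ℝ) {x t z : ℝ} (hx : x ≠ 0) (ht : t ≠ 0)
    (hz : z ≠ 0) :
    rankOneSphMeanDens k x t z = besselProdKernel (k - 1/2) |x| |t| |z| * |z| ^ (2 * k) *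
      ((z + x) ^ 2 - t ^ 2) / (4 * z * x) := by
  have ht' : -t ≠ 0 := neg_ne_zero.2 ht
  simp only [rankOneSphMeanDens, rankOneDens, abs_neg, sigCoeff_of_ne_zero _ hx ht,
    sigCoeff_of_ne_zero _ hz hx, sigCoeff_of_ne_zero _ hz ht, sigCoeff_of_ne_zero _ hx ht',
    sigCoeff_of_ne_zero _ hz ht']
  field_simp
  ring

theorem rankOneSphMeanDens_ne_zero {k x t z : ℝ} (hk : 0 < k) (hx : x ≠ 0) (ht : t ≠ 0)
    (h₁ : |(|x| - |t|)| < |z|) (h₂ : |z| < |x| + |t|) (hzx : (z + x) ^ 2 ≠ t ^ 2) :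
    rankOneSphMeanDens k x t z ≠ 0 := by
  have hz : z ≠ 0 := abs_pos.1 ((abs_nonneg _).trans_lt h₁)
  have hK := besselProdKernel_pos (α := k - 1/2) (by linarith) (abs_pos.2 hx) (abs_pos.2 ht)
    h₁ h₂
  rw [rankOneSphMeanDens_of_ne_zero k hx ht hz]
  exact div_ne_zero (mul_ne_zero (mul_ne_zero hK.ne' (by positivity)) (sub_ne_zero.2 hzx))
    (by simp [hz, hx])

/-- in the rank-one case, the support of `σ^k_{x,t}` (for `t ≠ 0`), i.e. the
closure of the set where its density does not vanish, equals
`[−|x|−t, −||x|−t|] ∪ [||x|−t|, |x|+t]`; in particular it is contained in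
`{ξ : |ξ−x| ≤ t} ∪ {ξ : |ξ+x| ≤ t}`. -/
theorem rankOne_spherical_mean_support (k : ℝ) (hk : 0 < k)
    (x : ℝ) (hx : x ≠ 0) (t : ℝ) (ht : 0 < t) :
    closure {z : ℝ | rankOneSphMeanDens k x t z ≠ 0}
        = Set.Icc (-|x| - t) (-|(|x| - t)|) ∪ Set.Icc |(|x| - t)| (|x| + t)
    ∧ Set.Icc (-|x| - t) (-|(|x| - t)|) ∪ Set.Icc |(|x| - t)| (|x| + t)
        ⊆ {ξ : ℝ | |ξ - x| ≤ t} ∪ {ξ : ℝ | |ξ + x| ≤ t} := by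
  have habs_t : |t| = t := abs_of_pos ht
  have hab : |(|x| - t)| < |x| + t :=
    abs_lt.2 ⟨by linarith [abs_pos.2 hx], by linarith⟩
  rw [← neg_add', ← preimage_abs_Icc (abs_nonneg _)]
  refine ⟨closure_eq_preimage_abs_Icc (abs_nonneg _) hab (s := {t - x, -t - x})
    (by simp) (fun z hz => ?_) ?_,
    fun ξ hξ => abs_sub_le_or_abs_add_le ((le_abs_self _).trans hξ.1) hξ.2⟩
  · by_contra h
    exact hz (rankOneSphMeanDens_eq_zero_of_abs_notMem (by rwa [habs_t]))
  · rintro z ⟨⟨h₁, h₂⟩, hzs⟩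
    have hzx : (z + x) ^ 2 ≠ t ^ 2 := fun hsq => by
      rcases sq_eq_sq_iff_eq_or_eq_neg.1 hsq with h | h
      exacts [hzs (Or.inl (by linarith)), hzs (Or.inr (by linarith : z = -t - x))]
    exact rankOneSphMeanDens_ne_zero hk hx ht.ne' (by rwa [habs_t]) (by rwa [habs_t]) hzx
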